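/- arXiv:2112.07234 — 6 statements merged into one kernel-verified Lean document; each statement's English description precedes it below -/
import Mathlib

section
/- Assume s γ₃ γ₄ > γ₂, s < γ₃, and β < 1. Then 0 < X₂ < X₃, and the three points 0, X₂, X₃ are equilibria of the deterministic model: F(0) = 0, F(X₂) = 0, and F(X₃) = 0. -/
/-!
Clearing the denominator `γ₃ γ₄ x + 1`, a positive equilibrium of `F` is a root of the quadratic
`γ₂ γ₃ γ₄ x² - (s γ₃ γ₄ - γ₂) x + (γ₃ - s)`, and `β` is its discriminant divided by the square of
the linear coefficient, so `X₂` and `X₃` are its two roots. Positivity of the constant term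
`γ₃ - s` gives `β > 0`, hence `√(1 - β) < 1` and both roots are positive.
-/

lemma quadratic_root_of_sq_eq {K : Type*} [Field K] [NeZero (2 : K)] {a b c d : K}
    (ha : a ≠ 0) (hb : b ≠ 0) (hd : d ^ 2 = 1 - 4 * a * c / b ^ 2) :
    a * (b * (1 + d) / (2 * a)) ^ 2 - b * (b * (1 + d) / (2 * a)) + c = 0 := by
  have h4 : (4 : K) ≠ 0 := by
    simpa [show (4 : K) = 2 * 2 by norm_num] using NeZero.ne (2 : K)
  have hc : c = (1 - d ^ 2) * b ^ 2 / (4 * a) := by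
    rw [hd]
    field_simp
    ring
  rw [hc]
  field_simp
  ring

lemma sub_sub_div_eq_zero_of_quadratic {K : Type*} [Field K] {s γ₂ γ₃ γ₄ x : K}
    (hden : γ₃ * γ₄ * x + 1 ≠ 0)
    (hq : γ₂ * γ₃ * γ₄ * x ^ 2 - (s * γ₃ * γ₄ - γ₂) * x + (γ₃ - s) = 0) :
    s - γ₂ * x - γ₃ / (γ₃ * γ₄ * x + 1) = 0 := by
  rw [sub_eq_zero, eq_div_iff hden]
  linear_combination -hq

lemma div_pos_and_lt_of_lt_one {a b d : ℝ} (ha : 0 < a) (hb : 0 < b) (hd₀ : 0 < d)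
    (hd₁ : d < 1) :
    0 < b * (1 - d) / (2 * a) ∧ b * (1 - d) / (2 * a) < b * (1 + d) / (2 * a) := by
  have h2a : 0 < 2 * a := by positivity
  refine ⟨div_pos (mul_pos hb (sub_pos.2 hd₁)) h2a, ?_⟩
  gcongr
  linarith

theorem three_equilibria_general
    (s γ₂ γ₃ γ₄ : ℝ) (h2 : 0 < γ₂) (h3 : 0 < γ₃) (h4 : 0 < γ₄)
    (F : ℝ → ℝ)
    (hF : ∀ x, F x = x * (s - γ₂ * x - γ₃ / (γ₃ * γ₄ * x + 1)))
    (β X₂ X₃ : ℝ)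
    (hβ : β = 4 * γ₂ * γ₃ * γ₄ * (γ₃ - s) / (s * γ₃ * γ₄ - γ₂) ^ 2)
    (hX₂ : X₂ = (s * γ₃ * γ₄ - γ₂) * (1 - Real.sqrt (1 - β)) / (2 * γ₂ * γ₃ * γ₄))
    (hX₃ : X₃ = (s * γ₃ * γ₄ - γ₂) * (1 + Real.sqrt (1 - β)) / (2 * γ₂ * γ₃ * γ₄))
    (hgt : s * γ₃ * γ₄ > γ₂) (hsγ₃ : s < γ₃) (hβ1 : β < 1) :
    0 < X₂ ∧ X₂ < X₃ ∧ F 0 = 0 ∧ F X₂ = 0 ∧ F X₃ = 0 := by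
  have ha : 0 < γ₂ * γ₃ * γ₄ := by positivity
  have hb : 0 < s * γ₃ * γ₄ - γ₂ := sub_pos.2 hgt
  have hβ0 : 0 < β := hβ ▸ div_pos (mul_pos (by positivity) (sub_pos.2 hsγ₃)) (by positivity)
  set d := Real.sqrt (1 - β)
  have hd₀ : 0 < d := Real.sqrt_pos.2 (sub_pos.2 hβ1)
  have hd₁ : d < 1 := (Real.sqrt_lt' one_pos).2 (by linarith)
  have hroot : ∀ e x : ℝ, e ^ 2 = 1 - β →
      x = (s * γ₃ * γ₄ - γ₂) * (1 + e) / (2 * (γ₂ * γ₃ * γ₄)) → 0 < x → F x = 0 := by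
    rintro e x he rfl hpos
    rw [hF, sub_sub_div_eq_zero_of_quadratic (by positivity), mul_zero]
    refine quadratic_root_of_sq_eq ha.ne' hb.ne' ?_
    rw [he, hβ]
    ring
  have hX₂' : X₂ = (s * γ₃ * γ₄ - γ₂) * (1 + -d) / (2 * (γ₂ * γ₃ * γ₄)) := by
    rw [hX₂]; ring
  have hX₃' : X₃ = (s * γ₃ * γ₄ - γ₂) * (1 + d) / (2 * (γ₂ * γ₃ * γ₄)) := by
    rw [hX₃]; ring
  obtain ⟨hX₂pos, hX₂X₃⟩ : 0 < X₂ ∧ X₂ < X₃ := by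
    rw [hX₂', hX₃', ← sub_eq_add_neg]
    exact div_pos_and_lt_of_lt_one ha hb hd₀ hd₁
  have hd_sq : d ^ 2 = 1 - β := Real.sq_sqrt (by linarith)
  refine ⟨hX₂pos, hX₂X₃, by simp [hF], ?_, ?_⟩
  · exact hroot (-d) X₂ (by rw [neg_sq, hd_sq]) hX₂' hX₂pos
  · exact hroot d X₃ hd_sq hX₃' (hX₂pos.trans hX₂X₃)

/-- Assume `s γ₃ γ₄ > γ₂`, `s < γ₃` and `β < 1`. Then `0 < X₂ < X₃` and the three points
`0`, `X₂`, `X₃` are equilibria of the deterministic model: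
`F(0) = 0`, `F(X₂) = 0` and `F(X₃) = 0`. -/
theorem three_equilibria
    (s γ₂ γ₃ γ₄ : ℝ) (hs : 0 < s) (h2 : 0 < γ₂) (h3 : 0 < γ₃) (h4 : 0 < γ₄)
    (F : ℝ → ℝ)
    (hF : ∀ x, F x = x * (s - γ₂ * x - γ₃ / (γ₃ * γ₄ * x + 1)))
    (β X₂ X₃ : ℝ)
    (hβ : β = 4 * γ₂ * γ₃ * γ₄ * (γ₃ - s) / (s * γ₃ * γ₄ - γ₂) ^ 2)
    (hX₂ : X₂ = (s * γ₃ * γ₄ - γ₂) * (1 - Real.sqrt (1 - β)) / (2 * γ₂ * γ₃ * γ₄))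
    (hX₃ : X₃ = (s * γ₃ * γ₄ - γ₂) * (1 + Real.sqrt (1 - β)) / (2 * γ₂ * γ₃ * γ₄))
    (hgt : s * γ₃ * γ₄ > γ₂) (hsγ₃ : s < γ₃) (hβ1 : β < 1) :
    0 < X₂ ∧ X₂ < X₃ ∧ F 0 = 0 ∧ F X₂ = 0 ∧ F X₃ = 0 :=
  three_equilibria_general s γ₂ γ₃ γ₄ h2 h3 h4 F hF β X₂ X₃ hβ hX₂ hX₃ hgt hsγ₃ hβ1
end

section
/- Assume s γ₃ γ₄ > γ₂ and 4 γ₂ γ₃ γ₄ (γ₃ − s) = (s γ₃ γ₄ − γ₂)² (i.e. β = 1). Then for every x ≥ 0, F(x) = 0 if and only if x = 0 or x = X₄; that is, at β = 1 the model has exactly the two equilibrium states 0 and X₄ = (s γ₃ γ₄ − γ₂)/(2 γ₂ γ₃ γ₄). -/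
/-!
Clearing the denominator, `F x = x · N(x) / (γ₃ γ₄ x + 1)` with `N` a concave quadratic whose
discriminant vanishes exactly when `β = 1`; then `N(x) = -γ₂ γ₃ γ₄ (x - X₄)²`, so on `x ≥ 0`
the only zeros of `F` are `0` and the double root `X₄`.
-/

theorem allee_growth_eq_neg_mul_sq_of_beta_eq_one {K : Type*} [Field K] (s γ₂ γ₃ γ₄ x : K)
    (hγ : 2 * γ₂ * γ₃ * γ₄ ≠ 0) (hx : γ₃ * γ₄ * x + 1 ≠ 0)
    (hβ1 : 4 * γ₂ * γ₃ * γ₄ * (γ₃ - s) = (s * γ₃ * γ₄ - γ₂) ^ 2) :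
    x * (s - γ₂ * x - γ₃ / (γ₃ * γ₄ * x + 1)) =
      -(γ₂ * γ₃ * γ₄ * (x * (x - (s * γ₃ * γ₄ - γ₂) / (2 * γ₂ * γ₃ * γ₄)) ^ 2)) /
        (γ₃ * γ₄ * x + 1) := by
  obtain ⟨⟨⟨htwo, hγ₂⟩, hγ₃⟩, hγ₄⟩ := by simpa only [mul_ne_zero_iff] using hγ
  rw [eq_div_iff hx, mul_assoc, sub_mul, div_mul_cancel₀ _ hx]
  field_simp
  linear_combination (-x) * hβ1

theorem two_equilibria_at_bifurcation_general
    (s γ₂ γ₃ γ₄ : ℝ) (h2 : 0 < γ₂) (h3 : 0 < γ₃) (h4 : 0 < γ₄)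
    (F : ℝ → ℝ)
    (hF : ∀ x, F x = x * (s - γ₂ * x - γ₃ / (γ₃ * γ₄ * x + 1)))
    (X₄ : ℝ)
    (hX₄ : X₄ = (s * γ₃ * γ₄ - γ₂) / (2 * γ₂ * γ₃ * γ₄))
    (hβ1 : 4 * γ₂ * γ₃ * γ₄ * (γ₃ - s) = (s * γ₃ * γ₄ - γ₂) ^ 2) :
    ∀ x : ℝ, 0 ≤ x → (F x = 0 ↔ x = 0 ∨ x = X₄) := by
  intro x hx
  have hden : γ₃ * γ₄ * x + 1 ≠ 0 := by positivity
  rw [hF, allee_growth_eq_neg_mul_sq_of_beta_eq_one s γ₂ γ₃ γ₄ x (by positivity) hden hβ1,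
    ← hX₄, div_eq_zero_iff, or_iff_left hden, neg_eq_zero, mul_eq_zero,
    or_iff_right (by positivity), mul_eq_zero, pow_eq_zero_iff two_ne_zero, sub_eq_zero]

/-- Assume `s γ₃ γ₄ > γ₂` and `4 γ₂ γ₃ γ₄ (γ₃ - s) = (s γ₃ γ₄ - γ₂)²` (i.e. `β = 1`).
Then for every `x ≥ 0`, `F(x) = 0` iff `x = 0` or `x = X₄`: at `β = 1` the model has
exactly the two equilibrium states `0` and `X₄ = (s γ₃ γ₄ - γ₂)/(2 γ₂ γ₃ γ₄)`. -/
theorem two_equilibria_at_bifurcation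
    (s γ₂ γ₃ γ₄ : ℝ) (hs : 0 < s) (h2 : 0 < γ₂) (h3 : 0 < γ₃) (h4 : 0 < γ₄)
    (F : ℝ → ℝ)
    (hF : ∀ x, F x = x * (s - γ₂ * x - γ₃ / (γ₃ * γ₄ * x + 1)))
    (X₄ : ℝ)
    (hX₄ : X₄ = (s * γ₃ * γ₄ - γ₂) / (2 * γ₂ * γ₃ * γ₄))
    (hgt : s * γ₃ * γ₄ > γ₂)
    (hβ1 : 4 * γ₂ * γ₃ * γ₄ * (γ₃ - s) = (s * γ₃ * γ₄ - γ₂) ^ 2) :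
    ∀ x : ℝ, 0 ≤ x → (F x = 0 ↔ x = 0 ∨ x = X₄) :=
  two_equilibria_at_bifurcation_general s γ₂ γ₃ γ₄ h2 h3 h4 F hF X₄ hX₄ hβ1
end

section
/- Assume 4 γ₂ γ₃ γ₄ (γ₃ − s) > (s γ₃ γ₄ − γ₂)² (i.e. β > 1). Then F(x) < 0 for every x > 0; in particular x = 0 is the unique nonnegative equilibrium of the deterministic model. -/
/-!
Clearing the positive denominator `γ₃ γ₄ x + 1`, the per-capita growth rate
`s - γ₂ x - γ₃ / (γ₃ γ₄ x + 1)` has the sign of `-(a x² + b x + c)` with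
`a = γ₂ γ₃ γ₄`, `b = γ₂ - s γ₃ γ₄`, `c = γ₃ - s`. The hypothesis `β > 1` says exactly that
this quadratic has negative discriminant, so with `a > 0` it is positive everywhere and the
growth rate is negative for all `x ≥ 0`.
-/

theorem quadratic_pos_of_discrim_neg {K : Type*} [Field K] [LinearOrder K] [IsStrictOrderedRing K]
    {a b c : K} (ha : 0 < a) (h : discrim a b c < 0) (x : K) :
    0 < a * (x * x) + b * x + c := by
  have hsq : 4 * a * (a * (x * x) + b * x + c) = (2 * a * x + b) ^ 2 - discrim a b c := by
    rw [discrim]; ring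
  have : 0 < 4 * a * (a * (x * x) + b * x + c) := by
    rw [hsq]; nlinarith [sq_nonneg (2 * a * x + b)]
  exact pos_of_mul_pos_right this (by positivity)

section AlleeModel

variable {s γ₂ γ₃ γ₄ : ℝ}

theorem allee_rate_eq {x : ℝ} (hD : γ₃ * γ₄ * x + 1 ≠ 0) :
    s - γ₂ * x - γ₃ / (γ₃ * γ₄ * x + 1) =
      -((γ₂ * γ₃ * γ₄) * (x * x) + (γ₂ - s * γ₃ * γ₄) * x + (γ₃ - s)) /
        (γ₃ * γ₄ * x + 1) := by
  rw [eq_div_iff hD, sub_mul, div_mul_cancel₀ _ hD]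
  ring

theorem allee_rate_neg (h2 : 0 < γ₂) (h3 : 0 < γ₃) (h4 : 0 < γ₄)
    (hβ : discrim (γ₂ * γ₃ * γ₄) (γ₂ - s * γ₃ * γ₄) (γ₃ - s) < 0) {x : ℝ} (hx : 0 ≤ x) :
    s - γ₂ * x - γ₃ / (γ₃ * γ₄ * x + 1) < 0 := by
  have hD : 0 < γ₃ * γ₄ * x + 1 := by positivity
  rw [allee_rate_eq hD.ne']
  exact div_neg_of_neg_of_pos
    (neg_neg_of_pos (quadratic_pos_of_discrim_neg (by positivity) hβ x)) hD

end AlleeModel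

theorem extinction_only_equilibrium_general
    (s γ₂ γ₃ γ₄ : ℝ) (h2 : 0 < γ₂) (h3 : 0 < γ₃) (h4 : 0 < γ₄)
    (F : ℝ → ℝ)
    (hF : ∀ x, F x = x * (s - γ₂ * x - γ₃ / (γ₃ * γ₄ * x + 1)))
    (hβ1 : 4 * γ₂ * γ₃ * γ₄ * (γ₃ - s) > (s * γ₃ * γ₄ - γ₂) ^ 2) :
    (∀ x : ℝ, 0 < x → F x < 0) ∧ (∀ x : ℝ, 0 ≤ x → (F x = 0 ↔ x = 0)) := by
  have hβ : discrim (γ₂ * γ₃ * γ₄) (γ₂ - s * γ₃ * γ₄) (γ₃ - s) < 0 := by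
    rw [discrim]; nlinarith
  have hneg : ∀ x : ℝ, 0 < x → F x < 0 := fun x hx => by
    rw [hF]
    exact mul_neg_of_pos_of_neg hx (allee_rate_neg h2 h3 h4 hβ hx.le)
  refine ⟨hneg, fun x hx => ⟨fun hFx => ?_, fun hx0 => by rw [hF, hx0, zero_mul]⟩⟩
  rcases hx.eq_or_lt with hx0 | hxpos
  · exact hx0.symm
  · exact absurd hFx (hneg x hxpos).ne

/-- Assume `4 γ₂ γ₃ γ₄ (γ₃ - s) > (s γ₃ γ₄ - γ₂)²` (i.e. `β > 1`). Then `F(x) < 0`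
for every `x > 0`; in particular `x = 0` is the unique nonnegative equilibrium of the
deterministic model. -/
theorem extinction_only_equilibrium
    (s γ₂ γ₃ γ₄ : ℝ) (hs : 0 < s) (h2 : 0 < γ₂) (h3 : 0 < γ₃) (h4 : 0 < γ₄)
    (F : ℝ → ℝ)
    (hF : ∀ x, F x = x * (s - γ₂ * x - γ₃ / (γ₃ * γ₄ * x + 1)))
    (hβ1 : 4 * γ₂ * γ₃ * γ₄ * (γ₃ - s) > (s * γ₃ * γ₄ - γ₂) ^ 2) :
    (∀ x : ℝ, 0 < x → F x < 0) ∧ (∀ x : ℝ, 0 ≤ x → (F x = 0 ↔ x = 0)) :=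
  extinction_only_equilibrium_general s γ₂ γ₃ γ₄ h2 h3 h4 F hF hβ1
end

section
/- Assume s γ₃ γ₄ > γ₂, s < γ₃, and β < 1. Then F'(X₂) > 0 and F'(X₃) < 0; that is, the lower nontrivial equilibrium X₂ is linearly unstable and the upper equilibrium X₃ is linearly stable. -/
/-!
Writing `F x = x * g x`, the nontrivial equilibria are the zeros of the per-capita rate `g`,
i.e. the roots of `a x² - b x + c` with `a = γ₂ γ₃ γ₄`, `b = s γ₃ γ₄ - γ₂`, `c = γ₃ - s`.
At such a root `F' = x g'`, and eliminating `γ₃ / (γ₃ γ₄ x + 1) = s - γ₂ x` from `g'` gives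
`F'(x) = x (b - 2 a x) / (γ₃ γ₄ x + 1)`. For `X = b (1 ± √(1 - β)) / (2 a)` the factor
`b - 2 a X` equals `∓ b √(1 - β)`, which fixes the signs.
-/

theorem HasDerivAt.id_mul_of_eq_zero {𝕜 : Type*} [NontriviallyNormedField 𝕜] {g : 𝕜 → 𝕜}
    {g' x : 𝕜} (hg : HasDerivAt g g' x) (hx : g x = 0) :
    HasDerivAt (fun y => y * g y) (x * g') x := by
  simpa [hx] using (hasDerivAt_id' x).fun_mul hg

/-- `ρ = ±√(1 - 4 a c / b²)` gives the two roots. -/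
theorem quadratic_eq_zero_of_two_mul_eq {K : Type*} [Field K] [NeZero (2 : K)]
    {a b c ρ x : K} (ha : a ≠ 0) (hb : b ≠ 0) (hρ : ρ ^ 2 = 1 - 4 * a * c / b ^ 2)
    (hx : 2 * a * x = b * (1 + ρ)) :
    a * x ^ 2 - b * x + c = 0 := by
  have hdiscrim : discrim a (-b) c = (2 * a * x + -b) ^ 2 := by
    rw [discrim, hx]
    field_simp at hρ
    linear_combination -hρ
  linear_combination (quadratic_eq_zero_iff_discrim_eq_sq ha x).mpr hdiscrim

section Allee

variable (s γ₂ γ₃ γ₄ : ℝ)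

theorem allee_rate_eq_neg_div {x : ℝ} (hd : γ₃ * γ₄ * x + 1 ≠ 0) :
    s - γ₂ * x - γ₃ / (γ₃ * γ₄ * x + 1) =
      -(γ₂ * γ₃ * γ₄ * x ^ 2 - (s * γ₃ * γ₄ - γ₂) * x + (γ₃ - s)) / (γ₃ * γ₄ * x + 1) := by
  -- `field_simp` reorders the denominator and would then no longer recognise `hd`.
  generalize hd_def : γ₃ * γ₄ * x + 1 = d at hd ⊢
  field_simp
  subst hd_def
  ring

theorem hasDerivAt_allee_rate {x : ℝ} (hd : γ₃ * γ₄ * x + 1 ≠ 0) :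
    HasDerivAt (fun x => s - γ₂ * x - γ₃ / (γ₃ * γ₄ * x + 1))
      (-γ₂ + γ₃ * (γ₃ * γ₄) / (γ₃ * γ₄ * x + 1) ^ 2) x := by
  have hden : HasDerivAt (fun x => γ₃ * γ₄ * x + 1) (γ₃ * γ₄) x := by
    simpa using ((hasDerivAt_id x).const_mul (γ₃ * γ₄)).add_const 1
  refine (((hasDerivAt_const x s).sub ((hasDerivAt_id x).const_mul γ₂)).sub
    ((hasDerivAt_const x γ₃).div hden hd)).congr_deriv ?_
  ring

theorem hasDerivAt_allee_of_root {x : ℝ} (hd : γ₃ * γ₄ * x + 1 ≠ 0)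
    (hroot : γ₂ * γ₃ * γ₄ * x ^ 2 - (s * γ₃ * γ₄ - γ₂) * x + (γ₃ - s) = 0) :
    HasDerivAt (fun x => x * (s - γ₂ * x - γ₃ / (γ₃ * γ₄ * x + 1)))
      (x * ((s * γ₃ * γ₄ - γ₂) - 2 * (γ₂ * γ₃ * γ₄) * x) / (γ₃ * γ₄ * x + 1)) x := by
  have hrate : s - γ₂ * x - γ₃ / (γ₃ * γ₄ * x + 1) = 0 := by
    rw [allee_rate_eq_neg_div s γ₂ γ₃ γ₄ hd, hroot, neg_zero, zero_div]
  refine ((hasDerivAt_allee_rate s γ₂ γ₃ γ₄ hd).id_mul_of_eq_zero hrate).congr_deriv ?_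
  generalize hd_def : γ₃ * γ₄ * x + 1 = d at hd ⊢
  field_simp
  subst hd_def
  linear_combination (x * γ₃ * γ₄) * hroot

theorem deriv_allee_of_two_mul_eq {F : ℝ → ℝ}
    (hF : ∀ x, F x = x * (s - γ₂ * x - γ₃ / (γ₃ * γ₄ * x + 1)))
    (h2 : 0 < γ₂) (h3 : 0 < γ₃) (h4 : 0 < γ₄) (hb : s * γ₃ * γ₄ - γ₂ ≠ 0) {ρ X : ℝ}
    (hρ : ρ ^ 2 = 1 - 4 * (γ₂ * γ₃ * γ₄) * (γ₃ - s) / (s * γ₃ * γ₄ - γ₂) ^ 2)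
    (hX₀ : 0 ≤ X) (hX : 2 * (γ₂ * γ₃ * γ₄) * X = (s * γ₃ * γ₄ - γ₂) * (1 + ρ)) :
    deriv F X = -(X * (s * γ₃ * γ₄ - γ₂) * ρ) / (γ₃ * γ₄ * X + 1) := by
  have hd : 0 < γ₃ * γ₄ * X + 1 := by positivity
  have hroot := quadratic_eq_zero_of_two_mul_eq (by positivity) hb hρ hX
  rw [funext hF, (hasDerivAt_allee_of_root s γ₂ γ₃ γ₄ hd.ne' hroot).deriv]
  congr 1
  linear_combination (-X) * hX

end Allee

theorem linear_stability_of_equilibria_general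
    (s γ₂ γ₃ γ₄ : ℝ) (h2 : 0 < γ₂) (h3 : 0 < γ₃) (h4 : 0 < γ₄)
    (F : ℝ → ℝ)
    (hF : ∀ x, F x = x * (s - γ₂ * x - γ₃ / (γ₃ * γ₄ * x + 1)))
    (β X₂ X₃ : ℝ)
    (hβ : β = 4 * γ₂ * γ₃ * γ₄ * (γ₃ - s) / (s * γ₃ * γ₄ - γ₂) ^ 2)
    (hX₂ : X₂ = (s * γ₃ * γ₄ - γ₂) * (1 - Real.sqrt (1 - β)) / (2 * γ₂ * γ₃ * γ₄))
    (hX₃ : X₃ = (s * γ₃ * γ₄ - γ₂) * (1 + Real.sqrt (1 - β)) / (2 * γ₂ * γ₃ * γ₄))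
    (hgt : s * γ₃ * γ₄ > γ₂) (hsγ₃ : s < γ₃) (hβ1 : β < 1) :
    deriv F X₂ > 0 ∧ deriv F X₃ < 0 := by
  set r := Real.sqrt (1 - β)
  have hb : 0 < s * γ₃ * γ₄ - γ₂ := sub_pos.mpr hgt
  have hβ₀ : 0 < β := by rw [hβ]; have := sub_pos.mpr hsγ₃; positivity
  have hr₀ : 0 < r := Real.sqrt_pos.mpr (by linarith)
  have hr_sq : r ^ 2 = 1 - β := Real.sq_sqrt (by linarith)
  have hr₁ : r < 1 := by nlinarith
  have hρ : r ^ 2 = 1 - 4 * (γ₂ * γ₃ * γ₄) * (γ₃ - s) / (s * γ₃ * γ₄ - γ₂) ^ 2 := by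
    rw [hr_sq, hβ]; ring
  have hX₂₀ : 0 < X₂ := by rw [hX₂]; have := sub_pos.mpr hr₁; positivity
  have hX₃₀ : 0 < X₃ := by rw [hX₃]; positivity
  have hX₂' : 2 * (γ₂ * γ₃ * γ₄) * X₂ = (s * γ₃ * γ₄ - γ₂) * (1 + -r) := by
    rw [hX₂]; field_simp; ring
  have hX₃' : 2 * (γ₂ * γ₃ * γ₄) * X₃ = (s * γ₃ * γ₄ - γ₂) * (1 + r) := by
    rw [hX₃]; field_simp
  rw [deriv_allee_of_two_mul_eq s γ₂ γ₃ γ₄ hF h2 h3 h4 hb.ne' (by rwa [neg_sq]) hX₂₀.le hX₂',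
    deriv_allee_of_two_mul_eq s γ₂ γ₃ γ₄ hF h2 h3 h4 hb.ne' hρ hX₃₀.le hX₃', mul_neg, neg_neg]
  constructor
  · positivity
  · rw [neg_div, neg_lt_zero]; positivity

/-- Assume `s γ₃ γ₄ > γ₂`, `s < γ₃` and `β < 1`. Then `F'(X₂) > 0` and `F'(X₃) < 0`:
the lower nontrivial equilibrium `X₂` is linearly unstable and the upper equilibrium
`X₃` is linearly stable. -/
theorem linear_stability_of_equilibria
    (s γ₂ γ₃ γ₄ : ℝ) (hs : 0 < s) (h2 : 0 < γ₂) (h3 : 0 < γ₃) (h4 : 0 < γ₄)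
    (F : ℝ → ℝ)
    (hF : ∀ x, F x = x * (s - γ₂ * x - γ₃ / (γ₃ * γ₄ * x + 1)))
    (β X₂ X₃ : ℝ)
    (hβ : β = 4 * γ₂ * γ₃ * γ₄ * (γ₃ - s) / (s * γ₃ * γ₄ - γ₂) ^ 2)
    (hX₂ : X₂ = (s * γ₃ * γ₄ - γ₂) * (1 - Real.sqrt (1 - β)) / (2 * γ₂ * γ₃ * γ₄))
    (hX₃ : X₃ = (s * γ₃ * γ₄ - γ₂) * (1 + Real.sqrt (1 - β)) / (2 * γ₂ * γ₃ * γ₄))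
    (hgt : s * γ₃ * γ₄ > γ₂) (hsγ₃ : s < γ₃) (hβ1 : β < 1) :
    deriv F X₂ > 0 ∧ deriv F X₃ < 0 :=
  linear_stability_of_equilibria_general s γ₂ γ₃ γ₄ h2 h3 h4 F hF β X₂ X₃ hβ hX₂ hX₃ hgt hsγ₃ hβ1
end

section
/- Assume s γ₃ γ₄ > γ₂, s < γ₃, and β < 1. Then the potential U(x) = −s x²/2 + γ₂ x³/3 + (γ₃/(γ₃ γ₄)²)·(γ₃ γ₄ x + 1 − ln(γ₃ γ₄ x + 1)), restricted to x ≥ 0, has a local minimum at x = 0, a local maximum at x = X₂, and a local minimum at x = X₃. -/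
/-!
Up to the positive factor `1 / (γ₃ γ₄ x + 1)`, the derivative `U' = -F` is the cubic
`x · ((γ₂ x - s)(γ₃ γ₄ x + 1) + γ₃)`, and `X₂ < X₃` are the two roots of its quadratic factor,
both positive because `β ∈ (0, 1)`. So `U'` changes sign from `-` to `+` at `0` and at `X₃`, and
from `+` to `-` at `X₂`. The first-derivative test on `x > -1 / (γ₃ γ₄)`, where `U` is smooth,
therefore gives two-sided local extrema, which a fortiori are extrema of `U` restricted to `x ≥ 0`.
-/

open Set

lemma hasDerivAt_of_eq_allee_potential {U : ℝ → ℝ} {s γ₂ κ c : ℝ}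
    (hU : ∀ x, U x = -(s * x ^ 2) / 2 + γ₂ * x ^ 3 / 3
      + (κ / c ^ 2) * (c * x + 1 - Real.log (c * x + 1)))
    (hc : c ≠ 0) {x : ℝ} (hx : c * x + 1 ≠ 0) :
    HasDerivAt U (x * ((γ₂ * x - s) * (c * x + 1) + κ) / (c * x + 1)) x := by
  rw [funext hU]
  have hlin : HasDerivAt (fun y : ℝ => c * y + 1) c x := by
    simpa using ((hasDerivAt_id x).const_mul c).add_const 1
  have hsum := ((((hasDerivAt_pow 2 x).const_mul s).neg.div_const 2).add
    (((hasDerivAt_pow 3 x).const_mul γ₂).div_const 3)).add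
    ((hlin.sub (hlin.log hx)).const_mul (κ / c ^ 2))
  refine hsum.congr_deriv ?_
  field_simp
  ring

lemma quadratic_eq_mul_sub_mul_sub {a p k β r₁ r₂ : ℝ} (ha : a ≠ 0)
    (hβ : β * p ^ 2 = 4 * a * k) (hβ1 : β ≤ 1)
    (hr₁ : 2 * a * r₁ = p * (1 - √(1 - β))) (hr₂ : 2 * a * r₂ = p * (1 + √(1 - β)))
    (x : ℝ) : a * x ^ 2 - p * x + k = a * (x - r₁) * (x - r₂) := by
  have hsqrt : √(1 - β) ^ 2 = 1 - β := Real.sq_sqrt (by linarith)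
  have hsum : a * (r₁ + r₂) = p := by linear_combination (hr₁ + hr₂) / 2
  have hprod : a * (r₁ * r₂) = k := by
    refine mul_left_cancel₀ ha ?_
    linear_combination (r₂ * hr₁ * 2 * a + p * (1 - √(1 - β)) * hr₂ - p ^ 2 * hsqrt + hβ) / 4
  linear_combination x * hsum - hprod

lemma quadratic_roots_pos_lt {a p β r₁ r₂ : ℝ} (ha : 0 < a) (hp : 0 < p)
    (hβ0 : 0 < β) (hβ1 : β < 1)
    (hr₁ : 2 * a * r₁ = p * (1 - √(1 - β))) (hr₂ : 2 * a * r₂ = p * (1 + √(1 - β))) :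
    0 < r₁ ∧ r₁ < r₂ := by
  have hsqrt_pos : 0 < √(1 - β) := Real.sqrt_pos.mpr (by linarith)
  have hsqrt_lt : √(1 - β) < 1 := (Real.sqrt_lt' one_pos).mpr (by rw [one_pow]; linarith)
  constructor
  · have : 0 < 2 * a * r₁ := hr₁ ▸ mul_pos hp (by linarith)
    exact pos_of_mul_pos_right this (by positivity)
  · have : 2 * a * r₁ < 2 * a * r₂ := by rw [hr₁, hr₂]; nlinarith
    exact lt_of_mul_lt_mul_left this (by positivity)

theorem isLocalMin_isLocalMax_isLocalMin_of_hasDerivAt_cubic {f g : ℝ → ℝ} {a r₁ r₂ : ℝ}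
    (ha : a < 0) (hr₁ : 0 < r₁) (hr₁₂ : r₁ < r₂)
    (hf : ∀ x ∈ Ioi a, HasDerivAt f (x * (x - r₁) * (x - r₂) * g x) x)
    (hg : ∀ x ∈ Ioi a, 0 < g x) :
    IsLocalMin f 0 ∧ IsLocalMax f r₁ ∧ IsLocalMin f r₂ := by
  have hdiff : ∀ b, a ≤ b → ∀ c, DifferentiableOn ℝ f (Ioo b c) := fun b hb c x hx =>
    (hf x (hb.trans_lt hx.1)).differentiableAt.differentiableWithinAt
  have hcont : ∀ b, a < b → ContinuousAt f b := fun b hb => (hf b hb).continuousAt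
  have hderiv : ∀ x, a < x → deriv f x = x * (x - r₁) * (x - r₂) * g x :=
    fun x hx => (hf x hx).deriv
  have hneg₀ : ∀ x ∈ Ioo a 0, deriv f x ≤ 0 := fun x ⟨hax, hx⟩ => by
    rw [hderiv x hax]
    exact (mul_neg_of_neg_of_pos (mul_neg_of_pos_of_neg (mul_pos_of_neg_of_neg hx (by linarith))
      (by linarith)) (hg x hax)).le
  have hpos₁ : ∀ x ∈ Ioo 0 r₁, 0 ≤ deriv f x := fun x ⟨hx, hxr⟩ => by
    rw [hderiv x (ha.trans hx)]
    exact (mul_pos (mul_pos_of_neg_of_neg (mul_neg_of_pos_of_neg hx (by linarith))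
      (by linarith)) (hg x (ha.trans hx))).le
  have hneg₂ : ∀ x ∈ Ioo r₁ r₂, deriv f x ≤ 0 := fun x ⟨hx, hxr⟩ => by
    have hax : a < x := by linarith
    rw [hderiv x hax]
    exact (mul_neg_of_neg_of_pos (mul_neg_of_pos_of_neg (mul_pos (by linarith) (by linarith))
      (by linarith)) (hg x hax)).le
  have hpos₃ : ∀ x ∈ Ioo r₂ (r₂ + 1), 0 ≤ deriv f x := fun x ⟨hx, _⟩ => by
    have hax : a < x := by linarith
    rw [hderiv x hax]
    exact (mul_pos (mul_pos (mul_pos (by linarith) (by linarith)) (by linarith))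
      (hg x hax)).le
  have har₂ : a < r₂ := by linarith
  exact ⟨isLocalMin_of_deriv_Ioo ha hr₁ (hcont 0 ha) (hdiff a le_rfl 0) (hdiff 0 ha.le r₁)
      hneg₀ hpos₁,
    isLocalMax_of_deriv_Ioo hr₁ hr₁₂ (hcont r₁ (by linarith)) (hdiff 0 ha.le r₁)
      (hdiff r₁ (by linarith) r₂) hpos₁ hneg₂,
    isLocalMin_of_deriv_Ioo hr₁₂ (lt_add_one r₂) (hcont r₂ har₂) (hdiff r₁ (by linarith) r₂)
      (hdiff r₂ har₂.le (r₂ + 1)) hneg₂ hpos₃⟩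

theorem potential_extrema_general
    (s γ₂ γ₃ γ₄ : ℝ) (h2 : 0 < γ₂) (h3 : 0 < γ₃) (h4 : 0 < γ₄)
    (U : ℝ → ℝ)
    (hU : ∀ x, U x = -(s * x ^ 2) / 2 + γ₂ * x ^ 3 / 3
      + (γ₃ / (γ₃ * γ₄) ^ 2) * (γ₃ * γ₄ * x + 1 - Real.log (γ₃ * γ₄ * x + 1)))
    (β X₂ X₃ : ℝ)
    (hβ : β = 4 * γ₂ * γ₃ * γ₄ * (γ₃ - s) / (s * γ₃ * γ₄ - γ₂) ^ 2)
    (hX₂ : X₂ = (s * γ₃ * γ₄ - γ₂) * (1 - Real.sqrt (1 - β)) / (2 * γ₂ * γ₃ * γ₄))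
    (hX₃ : X₃ = (s * γ₃ * γ₄ - γ₂) * (1 + Real.sqrt (1 - β)) / (2 * γ₂ * γ₃ * γ₄))
    (hgt : s * γ₃ * γ₄ > γ₂) (hsγ₃ : s < γ₃) (hβ1 : β < 1) :
    IsLocalMinOn U (Set.Ici (0 : ℝ)) 0 ∧
    IsLocalMaxOn U (Set.Ici (0 : ℝ)) X₂ ∧
    IsLocalMinOn U (Set.Ici (0 : ℝ)) X₃ := by
  have hc : 0 < γ₃ * γ₄ := mul_pos h3 h4
  have ha : 0 < γ₂ * γ₃ * γ₄ := by positivity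
  have hp : 0 < s * γ₃ * γ₄ - γ₂ := sub_pos.mpr hgt
  have hβ0 : 0 < β := hβ ▸ by have := sub_pos.mpr hsγ₃; positivity
  have hβp : β * (s * γ₃ * γ₄ - γ₂) ^ 2 = 4 * (γ₂ * γ₃ * γ₄) * (γ₃ - s) := by
    rw [hβ, div_mul_cancel₀ _ (pow_ne_zero 2 hp.ne')]; ring
  have hX₂root : 2 * (γ₂ * γ₃ * γ₄) * X₂ = (s * γ₃ * γ₄ - γ₂) * (1 - √(1 - β)) := by
    rw [hX₂]; field_simp
  have hX₃root : 2 * (γ₂ * γ₃ * γ₄) * X₃ = (s * γ₃ * γ₄ - γ₂) * (1 + √(1 - β)) := by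
    rw [hX₃]; field_simp
  obtain ⟨hX₂pos, hX₂₃⟩ := quadratic_roots_pos_lt ha hp hβ0 hβ1 hX₂root hX₃root
  have hlin : ∀ x ∈ Ioi (-1 / (γ₃ * γ₄)), 0 < γ₃ * γ₄ * x + 1 := fun x hx => by
    rw [mem_Ioi, div_lt_iff₀ hc] at hx; linarith
  have hderiv : ∀ x ∈ Ioi (-1 / (γ₃ * γ₄)),
      HasDerivAt U (x * (x - X₂) * (x - X₃) * (γ₂ * γ₃ * γ₄ / (γ₃ * γ₄ * x + 1))) x := by
    intro x hx
    refine (hasDerivAt_of_eq_allee_potential hU hc.ne' (hlin x hx).ne').congr_deriv ?_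
    rw [show (γ₂ * x - s) * (γ₃ * γ₄ * x + 1) + γ₃
        = γ₂ * γ₃ * γ₄ * x ^ 2 - (s * γ₃ * γ₄ - γ₂) * x + (γ₃ - s) by ring,
      quadratic_eq_mul_sub_mul_sub ha.ne' hβp hβ1.le hX₂root hX₃root x]
    ring
  obtain ⟨hmin₀, hmax₂, hmin₃⟩ := isLocalMin_isLocalMax_isLocalMin_of_hasDerivAt_cubic
    (div_neg_of_neg_of_pos neg_one_lt_zero hc) hX₂pos hX₂₃ hderiv
    fun x hx => div_pos ha (hlin x hx)
  exact ⟨hmin₀.on _, hmax₂.on _, hmin₃.on _⟩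

/-- Assume `s γ₃ γ₄ > γ₂`, `s < γ₃` and `β < 1`. Then the potential
`U(x) = -s x²/2 + γ₂ x³/3 + (γ₃/(γ₃ γ₄)²)(γ₃ γ₄ x + 1 - ln(γ₃ γ₄ x + 1))`,
restricted to `x ≥ 0`, has a local minimum at `x = 0`, a local maximum at `x = X₂`,
and a local minimum at `x = X₃`. -/
theorem potential_extrema
    (s γ₂ γ₃ γ₄ : ℝ) (hs : 0 < s) (h2 : 0 < γ₂) (h3 : 0 < γ₃) (h4 : 0 < γ₄)
    (U : ℝ → ℝ)
    (hU : ∀ x, U x = -(s * x ^ 2) / 2 + γ₂ * x ^ 3 / 3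
      + (γ₃ / (γ₃ * γ₄) ^ 2) * (γ₃ * γ₄ * x + 1 - Real.log (γ₃ * γ₄ * x + 1)))
    (β X₂ X₃ : ℝ)
    (hβ : β = 4 * γ₂ * γ₃ * γ₄ * (γ₃ - s) / (s * γ₃ * γ₄ - γ₂) ^ 2)
    (hX₂ : X₂ = (s * γ₃ * γ₄ - γ₂) * (1 - Real.sqrt (1 - β)) / (2 * γ₂ * γ₃ * γ₄))
    (hX₃ : X₃ = (s * γ₃ * γ₄ - γ₂) * (1 + Real.sqrt (1 - β)) / (2 * γ₂ * γ₃ * γ₄))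
    (hgt : s * γ₃ * γ₄ > γ₂) (hsγ₃ : s < γ₃) (hβ1 : β < 1) :
    IsLocalMinOn U (Set.Ici (0 : ℝ)) 0 ∧
    IsLocalMaxOn U (Set.Ici (0 : ℝ)) X₂ ∧
    IsLocalMinOn U (Set.Ici (0 : ℝ)) X₃ :=
  potential_extrema_general s γ₂ γ₃ γ₄ h2 h3 h4 U hU β X₂ X₃ hβ hX₂ hX₃ hgt hsγ₃ hβ1
end

section
/- Assume s γ₃ γ₄ > γ₂, s < γ₃, and β < 1. Let X : ℝ → ℝ be differentiable with X'(t) = F(X(t)) for all t ≥ 0 and X(0) ∈ (X₂, X₃). Then X(t) ∈ (X₂, X₃) for all t ≥ 0, and X(t) → X₃ as t → ∞; that is, the upper equilibrium X₃ attracts all trajectories starting above the Allee threshold X₂ and below X₃. -/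
/-!
The growth rate factors as `F x = γ₂ γ₃ γ₄ x (x - X₂) (X₃ - x) / (γ₃ γ₄ x + 1)`, so `F` is
positive on `(X₂, X₃)` and bounded there by a multiple of `X₃ - x`. Up to the first exit time the
trajectory increases, so it cannot leave through `X₂`, and Grönwall's inequality for `X - X₃`
keeps it below `X₃`. Hence the trajectory stays in `(X₂, X₃)`, is increasing and bounded, and
its limit `l` satisfies `F l = 0` by the mean value theorem, which forces `l = X₃`.
-/

open Filter Topology Set Real

theorem exists_first_exit {α : Type*} [TopologicalSpace α] {X : ℝ → α} {U : Set α}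
    (hU : IsOpen U) (hX : ContinuousOn X (Ici 0)) (h0 : X 0 ∈ U)
    (hexit : ∃ t, 0 ≤ t ∧ X t ∉ U) :
    ∃ τ, 0 < τ ∧ X τ ∉ U ∧ ∀ t ∈ Ico 0 τ, X t ∈ U := by
  set B := Ici 0 ∩ X ⁻¹' Uᶜ
  have hB : IsClosed B := hX.preimage_isClosed_of_isClosed isClosed_Ici hU.isClosed_compl
  have hBbdd : BddBelow B := ⟨0, fun t ht => ht.1⟩
  obtain ⟨hτ0, hτU⟩ : sInf B ∈ B := hB.csInf_mem hexit hBbdd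
  refine ⟨sInf B, hτ0.lt_of_ne ?_, hτU, fun t ht => ?_⟩
  · rintro h
    exact hτU (h ▸ h0)
  · by_contra hXt
    exact (csInf_le hBbdd ⟨ht.1, hXt⟩).not_gt ht.2

theorem eq_zero_of_tendsto_of_tendsto_deriv {X X' : ℝ → ℝ} {l c : ℝ}
    (hX : ∀ᶠ t in atTop, HasDerivAt X (X' t) t) (hl : Tendsto X atTop (𝓝 l))
    (hc : Tendsto X' atTop (𝓝 c)) : c = 0 := by
  obtain ⟨T, hT⟩ := eventually_atTop.1 hX
  have hslope : ∀ t ≥ T, ∃ ξ ∈ Ioo t (t + 1), X' ξ = X (t + 1) - X t := by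
    intro t ht
    have hderiv : ∀ x ∈ Icc t (t + 1), HasDerivAt X (X' x) x := fun x hx => hT x (ht.trans hx.1)
    obtain ⟨ξ, hξ, h⟩ := exists_hasDerivAt_eq_slope X X' (lt_add_one t)
      (fun x hx => (hderiv x hx).continuousAt.continuousWithinAt)
      (fun x hx => hderiv x (Ioo_subset_Icc_self hx))
    exact ⟨ξ, hξ, by simpa using h⟩
  choose! ξ hξ hξX' using hslope
  have hξ_tendsto : Tendsto ξ atTop atTop :=
    tendsto_atTop_mono' _ ((eventually_ge_atTop T).mono fun t ht => (hξ t ht).1.le) tendsto_id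
  have hincr : Tendsto (fun t => X (t + 1) - X t) atTop (𝓝 0) := by
    simpa using (hl.comp (tendsto_atTop_add_const_right _ 1 tendsto_id)).sub hl
  refine tendsto_nhds_unique ((hc.comp hξ_tendsto).congr' ?_) hincr
  filter_upwards [eventually_ge_atTop T] with t ht using hξX' t ht

theorem exists_tendsto_of_monotoneOn_Ici {f : ℝ → ℝ} {c b : ℝ} (hf : MonotoneOn f (Ici c))
    (hb : ∀ t ≥ c, f t ≤ b) : ∃ l, Tendsto f atTop (𝓝 l) := by
  have hmono : Monotone fun t : Ici c => f t := fun t u htu => hf t.2 u.2 htu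
  refine ⟨_, tendsto_comp_val_Ici_atTop.1 (tendsto_atTop_ciSup hmono ?_)⟩
  exact ⟨b, by rintro _ ⟨t, rfl⟩; exact hb t t.2⟩

section AutonomousODE

variable {F X : ℝ → ℝ} {a b : ℝ}

theorem strictMonoOn_of_hasDerivAt_of_mem_Ioo (hpos : ∀ x ∈ Ioo a b, 0 < F x)
    (hX : ∀ t, 0 ≤ t → HasDerivAt X (F (X t)) t) {D : Set ℝ} (hD : Convex ℝ D)
    (hD0 : D ⊆ Ici 0) (hmem : ∀ t ∈ interior D, X t ∈ Ioo a b) : StrictMonoOn X D := by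
  refine strictMonoOn_of_deriv_pos hD
    (fun t ht => (hX t (hD0 ht)).continuousAt.continuousWithinAt) fun t ht => ?_
  rw [(hX t (hD0 (interior_subset ht))).deriv]
  exact hpos _ (hmem t ht)

theorem mem_Ioo_of_hasDerivAt {L : ℝ} (hpos : ∀ x ∈ Ioo a b, 0 < F x)
    (hlin : ∀ x ∈ Ioo a b, F x ≤ L * (b - x)) (hX : ∀ t, 0 ≤ t → HasDerivAt X (F (X t)) t)
    (h0 : X 0 ∈ Ioo a b) : ∀ t, 0 ≤ t → X t ∈ Ioo a b := by
  by_contra! hexit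
  obtain ⟨τ, hτ, hτ_out, hbefore⟩ := exists_first_exit isOpen_Ioo
    (fun t ht => (hX t ht).continuousAt.continuousWithinAt) h0 hexit
  have hmono : StrictMonoOn X (Icc 0 τ) :=
    strictMonoOn_of_hasDerivAt_of_mem_Ioo hpos hX (convex_Icc 0 τ) (fun t ht => ht.1)
      fun t ht => hbefore t (Ioo_subset_Ico_self (by rwa [interior_Icc] at ht))
  -- `X - b` has derivative `F X ≤ -L (X - b)` before the exit time.
  have hgronwall : X τ - b ≤ gronwallBound (X 0 - b) (-L) 0 (τ - 0) := by
    refine le_gronwallBound_of_liminf_deriv_right_le (f := fun t => X t - b)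
      (f' := fun t => F (X t)) (fun t ht => ((hX t ht.1).continuousAt.sub
        continuousAt_const).continuousWithinAt) (fun t ht r hr => ?_) le_rfl
      (fun t ht => by linarith [hlin _ (hbefore t ht)]) τ ⟨hτ.le, le_rfl⟩
    exact ((hX t ht.1).sub_const b).hasDerivWithinAt.liminf_right_slope_le hr
  rw [gronwallBound_ε0] at hgronwall
  have hbelow : X τ < b := by
    nlinarith [exp_pos (-L * (τ - 0)), sub_neg.2 h0.2]
  exact hτ_out ⟨h0.1.trans (hmono ⟨le_rfl, hτ.le⟩ ⟨hτ.le, le_rfl⟩ hτ), hbelow⟩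

theorem tendsto_of_hasDerivAt_of_mem_Ioo (hpos : ∀ x ∈ Ioo a b, 0 < F x)
    (hF : ContinuousOn F (Ioo a b)) (hX : ∀ t, 0 ≤ t → HasDerivAt X (F (X t)) t)
    (hinv : ∀ t, 0 ≤ t → X t ∈ Ioo a b) : Tendsto X atTop (𝓝 b) := by
  have hmono : MonotoneOn X (Ici 0) :=
    (strictMonoOn_of_hasDerivAt_of_mem_Ioo hpos hX (convex_Ici 0) subset_rfl
      fun t ht => hinv t (interior_subset ht)).monotoneOn
  obtain ⟨l, hl⟩ := exists_tendsto_of_monotoneOn_Ici hmono fun t ht => (hinv t ht).2.le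
  have hal : a < l := (hinv 0 le_rfl).1.trans_le <| ge_of_tendsto hl <|
    (eventually_ge_atTop 0).mono fun t ht => hmono self_mem_Ici ht ht
  have hlb : l ≤ b := le_of_tendsto hl <|
    (eventually_ge_atTop 0).mono fun t ht => (hinv t ht).2.le
  obtain rfl | hlb := hlb.eq_or_lt
  · exact hl
  have hFl : F l = 0 := eq_zero_of_tendsto_of_tendsto_deriv
    ((eventually_ge_atTop 0).mono hX) hl
    ((hF.continuousAt (isOpen_Ioo.mem_nhds ⟨hal, hlb⟩)).tendsto.comp hl)
  exact absurd hFl (hpos l ⟨hal, hlb⟩).ne'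

end AutonomousODE

section QuadraticRoots

variable {A B C β x₂ x₃ : ℝ}

theorem quadratic_roots_vieta (hA : A ≠ 0) (hB : B ≠ 0) (hβ : β = 4 * A * C / B ^ 2)
    (hβ1 : β ≤ 1) (hx₂ : x₂ = B * (1 - √(1 - β)) / (2 * A))
    (hx₃ : x₃ = B * (1 + √(1 - β)) / (2 * A)) :
    A * (x₂ + x₃) = B ∧ A * (x₂ * x₃) = C := by
  have hsq : √(1 - β) ^ 2 = 1 - β := sq_sqrt (by linarith)
  subst hx₂ hx₃
  constructor
  · field_simp; ring
  · calc A * (B * (1 - √(1 - β)) / (2 * A) * (B * (1 + √(1 - β)) / (2 * A)))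
        = B ^ 2 * (1 - √(1 - β) ^ 2) / (4 * A) := by field_simp; ring
      _ = C := by rw [hsq, hβ]; field_simp; ring

theorem quadratic_root_pos (hA : 0 < A) (hB : 0 < B) (hC : 0 < C)
    (hβ : β = 4 * A * C / B ^ 2) (hx₂ : x₂ = B * (1 - √(1 - β)) / (2 * A)) : 0 < x₂ := by
  have hβ0 : 0 < β := hβ ▸ by positivity
  have hr1 : √(1 - β) < 1 := by
    rw [sqrt_lt' one_pos]
    linarith
  rw [hx₂]
  exact div_pos (mul_pos hB (by linarith)) (by positivity)

end QuadraticRoots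

noncomputable def alleeRate (s γ₂ γ₃ γ₄ x : ℝ) : ℝ :=
  x * (s - γ₂ * x - γ₃ / (γ₃ * γ₄ * x + 1))

section AlleeRate

variable {s γ₂ γ₃ γ₄ p q x : ℝ}

theorem alleeRate_eq_factored (hsum : γ₂ * γ₃ * γ₄ * (p + q) = s * γ₃ * γ₄ - γ₂)
    (hprod : γ₂ * γ₃ * γ₄ * (p * q) = γ₃ - s) (hx : γ₃ * γ₄ * x + 1 ≠ 0) :
    alleeRate s γ₂ γ₃ γ₄ x = γ₂ * γ₃ * γ₄ * x * (x - p) * (q - x) / (γ₃ * γ₄ * x + 1) := by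
  rw [alleeRate, eq_div_iff hx, mul_assoc, sub_mul, div_mul_cancel₀ _ hx]
  linear_combination (-x * x) * hsum + x * hprod

theorem alleeRate_pos (h2 : 0 < γ₂) (h3 : 0 < γ₃) (h4 : 0 < γ₄) (hp : 0 < p)
    (hsum : γ₂ * γ₃ * γ₄ * (p + q) = s * γ₃ * γ₄ - γ₂)
    (hprod : γ₂ * γ₃ * γ₄ * (p * q) = γ₃ - s) (hx : x ∈ Ioo p q) :
    0 < alleeRate s γ₂ γ₃ γ₄ x := by
  have hx0 : 0 < x := hp.trans hx.1
  have hxp : 0 < x - p := sub_pos.2 hx.1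
  have hqx : 0 < q - x := sub_pos.2 hx.2
  rw [alleeRate_eq_factored hsum hprod (by positivity)]
  positivity

theorem alleeRate_le (h2 : 0 < γ₂) (h3 : 0 < γ₃) (h4 : 0 < γ₄) (hp : 0 < p)
    (hsum : γ₂ * γ₃ * γ₄ * (p + q) = s * γ₃ * γ₄ - γ₂)
    (hprod : γ₂ * γ₃ * γ₄ * (p * q) = γ₃ - s) (hx : x ∈ Ioo p q) :
    alleeRate s γ₂ γ₃ γ₄ x ≤ γ₂ * γ₃ * γ₄ * q * (q - p) * (q - x) := by
  have hx0 : 0 < x := hp.trans hx.1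
  have hxp : 0 < x - p := sub_pos.2 hx.1
  have hqx : 0 < q - x := sub_pos.2 hx.2
  have hq : 0 < q := hx0.trans hx.2
  rw [alleeRate_eq_factored hsum hprod (by positivity)]
  calc γ₂ * γ₃ * γ₄ * x * (x - p) * (q - x) / (γ₃ * γ₄ * x + 1)
      ≤ γ₂ * γ₃ * γ₄ * x * (x - p) * (q - x) :=
        div_le_self (by positivity) (by nlinarith [mul_pos (mul_pos h3 h4) hx0])
    _ ≤ γ₂ * γ₃ * γ₄ * q * (q - p) * (q - x) := by
        gcongr <;> linarith [hx.2]

theorem continuousOn_alleeRate (h3 : 0 < γ₃) (h4 : 0 < γ₄) :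
    ContinuousOn (alleeRate s γ₂ γ₃ γ₄) (Ioi 0) := by
  unfold alleeRate
  fun_prop (disch := intro x hx; rw [mem_Ioi] at hx; positivity)

end AlleeRate

theorem attraction_to_upper_equilibrium_general
    (s γ₂ γ₃ γ₄ : ℝ) (h2 : 0 < γ₂) (h3 : 0 < γ₃) (h4 : 0 < γ₄)
    (F : ℝ → ℝ)
    (hF : ∀ x, F x = x * (s - γ₂ * x - γ₃ / (γ₃ * γ₄ * x + 1)))
    (β X₂ X₃ : ℝ)
    (hβ : β = 4 * γ₂ * γ₃ * γ₄ * (γ₃ - s) / (s * γ₃ * γ₄ - γ₂) ^ 2)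
    (hX₂ : X₂ = (s * γ₃ * γ₄ - γ₂) * (1 - Real.sqrt (1 - β)) / (2 * γ₂ * γ₃ * γ₄))
    (hX₃ : X₃ = (s * γ₃ * γ₄ - γ₂) * (1 + Real.sqrt (1 - β)) / (2 * γ₂ * γ₃ * γ₄))
    (hgt : s * γ₃ * γ₄ > γ₂) (hsγ₃ : s < γ₃) (hβ1 : β < 1)
    (X : ℝ → ℝ) (hXdiff : Differentiable ℝ X)
    (hODE : ∀ t : ℝ, 0 ≤ t → deriv X t = F (X t))
    (hX0 : X 0 ∈ Set.Ioo X₂ X₃) :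
    (∀ t : ℝ, 0 ≤ t → X t ∈ Set.Ioo X₂ X₃) ∧
    Tendsto X atTop (𝓝 X₃) := by
  have hk : 0 < γ₂ * γ₃ * γ₄ := by positivity
  have hB : 0 < s * γ₃ * γ₄ - γ₂ := sub_pos.2 hgt
  have hβ' : β = 4 * (γ₂ * γ₃ * γ₄) * (γ₃ - s) / (s * γ₃ * γ₄ - γ₂) ^ 2 := hβ.trans (by ring)
  have hX₂' : X₂ = (s * γ₃ * γ₄ - γ₂) * (1 - √(1 - β)) / (2 * (γ₂ * γ₃ * γ₄)) :=
    hX₂.trans (by ring)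
  have hX₃' : X₃ = (s * γ₃ * γ₄ - γ₂) * (1 + √(1 - β)) / (2 * (γ₂ * γ₃ * γ₄)) :=
    hX₃.trans (by ring)
  obtain ⟨hsum, hprod⟩ := quadratic_roots_vieta hk.ne' hB.ne' hβ' hβ1.le hX₂' hX₃'
  have hX₂pos : 0 < X₂ := quadratic_root_pos hk hB (sub_pos.2 hsγ₃) hβ' hX₂'
  obtain rfl : F = alleeRate s γ₂ γ₃ γ₄ := funext hF
  have hX : ∀ t, 0 ≤ t → HasDerivAt X (alleeRate s γ₂ γ₃ γ₄ (X t)) t :=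
    fun t ht => hODE t ht ▸ (hXdiff t).hasDerivAt
  have hpos := fun x (hx : x ∈ Ioo X₂ X₃) => alleeRate_pos h2 h3 h4 hX₂pos hsum hprod hx
  have hinv := mem_Ioo_of_hasDerivAt hpos
    (fun x hx => alleeRate_le h2 h3 h4 hX₂pos hsum hprod hx) hX hX0
  exact ⟨hinv, tendsto_of_hasDerivAt_of_mem_Ioo hpos
    ((continuousOn_alleeRate h3 h4).mono fun x hx => hX₂pos.trans hx.1) hX hinv⟩

/-- Assume `s γ₃ γ₄ > γ₂`, `s < γ₃` and `β < 1`. If `X` is a solution of the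
deterministic model `X' = F(X)` for `t ≥ 0` with `X(0) ∈ (X₂, X₃)`, then
`X(t) ∈ (X₂, X₃)` for all `t ≥ 0` and `X(t) → X₃` as `t → ∞`: the upper equilibrium
`X₃` attracts all trajectories starting above the Allee threshold `X₂` and below `X₃`. -/
theorem attraction_to_upper_equilibrium
    (s γ₂ γ₃ γ₄ : ℝ) (hs : 0 < s) (h2 : 0 < γ₂) (h3 : 0 < γ₃) (h4 : 0 < γ₄)
    (F : ℝ → ℝ)
    (hF : ∀ x, F x = x * (s - γ₂ * x - γ₃ / (γ₃ * γ₄ * x + 1)))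
    (β X₂ X₃ : ℝ)
    (hβ : β = 4 * γ₂ * γ₃ * γ₄ * (γ₃ - s) / (s * γ₃ * γ₄ - γ₂) ^ 2)
    (hX₂ : X₂ = (s * γ₃ * γ₄ - γ₂) * (1 - Real.sqrt (1 - β)) / (2 * γ₂ * γ₃ * γ₄))
    (hX₃ : X₃ = (s * γ₃ * γ₄ - γ₂) * (1 + Real.sqrt (1 - β)) / (2 * γ₂ * γ₃ * γ₄))
    (hgt : s * γ₃ * γ₄ > γ₂) (hsγ₃ : s < γ₃) (hβ1 : β < 1)
    (X : ℝ → ℝ) (hXdiff : Differentiable ℝ X)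
    (hODE : ∀ t : ℝ, 0 ≤ t → deriv X t = F (X t))
    (hX0 : X 0 ∈ Set.Ioo X₂ X₃) :
    (∀ t : ℝ, 0 ≤ t → X t ∈ Set.Ioo X₂ X₃) ∧
    Tendsto X atTop (𝓝 X₃) :=
  attraction_to_upper_equilibrium_general s γ₂ γ₃ γ₄ h2 h3 h4 F hF β X₂ X₃ hβ hX₂ hX₃ hgt hsγ₃ hβ1 X
    hXdiff hODE hX0
end
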